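/- For every even integer n ≥ 6, there is no entropy of mixing S : Ω_n → ℝ. -/

import Mathlib

open Real

noncomputable section

/-- The ambient vector space ℝ³. -/
abbrev V3 : Type := Fin 3 → ℝ

/-- The linear functional on ℝ³ given by the Euclidean inner product with `v`. -/
def dotL (v : V3) : V3 →ₗ[ℝ] ℝ :=
  ∑ i, v i • (LinearMap.proj i : V3 →ₗ[ℝ] ℝ)

/-- The unit effect `u (x, y, z) = z`. -/
def uEff : V3 →ₗ[ℝ] ℝ := LinearMap.proj 2

/-- `e` is an effect on `Ω`: a linear functional with values in `[0,1]` on `Ω`. -/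
def IsEffect (Ω : Set V3) (e : V3 →ₗ[ℝ] ℝ) : Prop :=
  ∀ ω ∈ Ω, 0 ≤ e ω ∧ e ω ≤ 1

/-- The states `ω 0, …, ω (l-1)` are perfectly distinguishable in `Ω`:
there are effects summing to the unit effect with `e i (ω j) = δ_{ij}`. -/
def PerfDist (Ω : Set V3) {l : ℕ} (ω : Fin l → V3) : Prop :=
  ∃ e : Fin l → (V3 →ₗ[ℝ] ℝ),
    (∀ i, IsEffect Ω (e i)) ∧ (∑ i, e i) = uEff ∧
    ∀ i j, e i (ω j) = if i = j then 1 else 0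

/-- `S` is an entropy of mixing on `Ω`: it vanishes on extreme points, and for every
finite family of perfectly distinguishable states and every probability weight,
`S (Σ pᵢ ωᵢ) = Σ pᵢ S(ωᵢ) − Σ pᵢ log pᵢ` (note `Real.log 0 = 0`, so `0 log 0 = 0`). -/
def IsEntropyOfMixing (Ω : Set V3) (S : V3 → ℝ) : Prop :=
  (∀ ω ∈ Set.extremePoints ℝ Ω, S ω = 0) ∧
  ∀ (l : ℕ) (ω : Fin l → V3), (∀ j, ω j ∈ Ω) → PerfDist Ω ω →
    ∀ p : Fin l → ℝ, (∀ i, 0 ≤ p i) → (∑ i, p i) = 1 →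
      S (∑ i, p i • ω i) = (∑ i, p i * S (ω i)) - ∑ i, p i * Real.log (p i)

/-- `r_n = √(1 / cos (π/n))`. -/
def rn (n : ℕ) : ℝ := Real.sqrt (1 / Real.cos (π / n))

/-- The pure states `ω_i^n` of the `n`-gon theory (indices mod `n` via periodicity). -/
def pur (n : ℕ) (i : ℤ) : V3 :=
  ![rn n * Real.cos (2 * π * i / n), rn n * Real.sin (2 * π * i / n), 1]

/-- The `n`-gon state space `Ω_n`: the convex hull of the `n` pure states. -/
def Omega (n : ℕ) : Set V3 :=
  convexHull ℝ {x : V3 | ∃ i : Fin n, x = pur n (i : ℤ)}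

/-- The extreme effect `e_i^n` for even `n`. -/
def effE (n : ℕ) (i : ℤ) : V3 →ₗ[ℝ] ℝ :=
  dotL ((1/2 : ℝ) •
    ![rn n * Real.cos ((2*i-1) * π / n), rn n * Real.sin ((2*i-1) * π / n), 1])

/-- The extreme effect `e_i^n` for odd `n`. -/
def effO (n : ℕ) (i : ℤ) : V3 →ₗ[ℝ] ℝ :=
  dotL ((1/(1 + rn n ^ 2)) •
    ![rn n * Real.cos (2*i*π/n), rn n * Real.sin (2*i*π/n), 1])

/-- The disk state space `Ω_∞ = {(x,y,1) : x² + y² ≤ 1}`. -/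
def OmegaInf : Set V3 := {x : V3 | x 2 = 1 ∧ (x 0)^2 + (x 1)^2 ≤ 1}

/-- The pure states `ω_θ^∞` of the disk theory. -/
def purInf (θ : ℝ) : V3 := ![Real.cos θ, Real.sin θ, 1]

/-- The extreme effects `e_θ^∞` of the disk theory. -/
def effInf (θ : ℝ) : V3 →ₗ[ℝ] ℝ :=
  dotL ((1/2 : ℝ) • ![Real.cos θ, Real.sin θ, 1])

/-- The binary (1-bit Shannon) entropy `H(p) = −p log p − (1−p) log (1−p)`. -/
def H (p : ℝ) : ℝ := -(p * Real.log p) - (1 - p) * Real.log (1 - p)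
lemma dotL_apply (v x : V3) : dotL v x = v 0 * x 0 + v 1 * x 1 + v 2 * x 2 := by
  simp [dotL, Fin.sum_univ_three]

lemma sinprod (h : ℕ) (hh : 0 < h) (a : ℤ) :
    0 ≤ Real.sin (a * π / h) * Real.sin ((a - 1) * π / h) := by
  have hh' : (0:ℝ) < h := by exact_mod_cast hh
  set q := a / (h:ℤ) with hq
  set t := a % (h:ℤ) with ht
  have hht : (0:ℤ) ≤ t := Int.emod_nonneg a (by exact_mod_cast hh.ne')
  have htl : t < h := Int.emod_lt_of_pos a (by exact_mod_cast hh)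
  have ha : a = h * q + t := (Int.mul_ediv_add_emod a h).symm
  rcases eq_or_lt_of_le hht with h0 | h1
  · have e0 : (a:ℝ) * π / h = q * π := by
      rw [ha]; push_cast [← h0]; field_simp; ring
    rw [e0, Real.sin_int_mul_pi, zero_mul]
  · have e1 : (a:ℝ) * π / h = (t:ℝ) * π / h + q * π := by
      rw [ha]; push_cast; field_simp; ring
    have e2 : ((a:ℝ) - 1) * π / h = ((t:ℝ) - 1) * π / h + q * π := by
      rw [ha]; push_cast; field_simp; ring
    rw [e1, e2, Real.sin_add_int_mul_pi, Real.sin_add_int_mul_pi]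
    have s1 : 0 ≤ Real.sin ((t:ℝ) * π / h) := by
      apply Real.sin_nonneg_of_nonneg_of_le_pi
      · positivity
      · rw [div_le_iff₀ hh']
        have : (t:ℝ) ≤ h := by exact_mod_cast htl.le
        nlinarith [Real.pi_pos]
    have s2 : 0 ≤ Real.sin (((t:ℝ) - 1) * π / h) := by
      apply Real.sin_nonneg_of_nonneg_of_le_pi
      · have h1' : (1:ℝ) ≤ (t:ℝ) := by exact_mod_cast h1
        exact div_nonneg (mul_nonneg (by linarith) Real.pi_pos.le) hh'.le
      · rw [div_le_iff₀ hh']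
        have : (t:ℝ) ≤ h := by exact_mod_cast htl.le
        nlinarith [Real.pi_pos]
    have hsq : ((-1:ℝ)) ^ q * ((-1:ℝ)) ^ q = 1 := by
      rw [← mul_zpow]; norm_num
    calc (0:ℝ) ≤ Real.sin ((t:ℝ) * π / h) * Real.sin (((t:ℝ) - 1) * π / h) :=
          mul_nonneg s1 s2
      _ = (-1:ℝ) ^ q * Real.sin ((t:ℝ) * π / h) * ((-1:ℝ) ^ q * Real.sin (((t:ℝ) - 1) * π / h)) := by
          rw [mul_mul_mul_comm, hsq, one_mul]
      _ = _ := by ring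

lemma cos_sq_sub_cos_sq (A B : ℝ) :
    Real.cos A ^ 2 - Real.cos B ^ 2 = Real.sin (B + A) * Real.sin (B - A) := by
  rw [Real.sin_add, Real.sin_sub]
  nlinarith [Real.sin_sq_add_cos_sq A, Real.sin_sq_add_cos_sq B]

lemma effE_apply (n : ℕ) (hc : 0 < Real.cos (π / n)) (k j : ℤ) :
    effE n k (pur n j) =
      (Real.cos ((2*(k - j) - 1) * π / n) / Real.cos (π / n) + 1) / 2 := by
  have hr : rn n ^ 2 = 1 / Real.cos (π / n) := Real.sq_sqrt (by positivity)
  have hcos : Real.cos ((2*((k:ℝ) - j) - 1) * π / n)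
      = Real.cos ((2*k-1) * π / n) * Real.cos (2 * π * j / n)
        + Real.sin ((2*k-1) * π / n) * Real.sin (2 * π * j / n) := by
    rw [← Real.cos_sub]
    congr 1
    ring
  rw [effE, dotL_apply]
  simp only [Pi.smul_apply, smul_eq_mul, pur, Matrix.cons_val_zero, Matrix.cons_val_one,
    Matrix.head_cons, Matrix.cons_val_two, Matrix.tail_cons]
  rw [hcos]
  linear_combination ((Real.cos ((2*(k:ℝ)-1) * π / n) * Real.cos (2 * π * j / n)
    + Real.sin ((2*(k:ℝ)-1) * π / n) * Real.sin (2 * π * j / n)) / 2) * hr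

lemma cos_odd_bound (h : ℕ) (hh : 0 < h) (m : ℤ) :
    |Real.cos ((2*(m:ℝ) - 1) * π / (2*h))| ≤ Real.cos (π / (2*h)) := by
  have hh' : (0:ℝ) < h := by exact_mod_cast hh
  have pi0 := Real.pi_pos
  have hcn : 0 ≤ Real.cos (π / (2*h)) := by
    apply Real.cos_nonneg_of_mem_Icc
    constructor
    · have : (0:ℝ) ≤ π / (2*h) := by positivity
      linarith
    · rw [div_le_div_iff₀ (by positivity) (by norm_num)]
      have h1 : (1:ℝ) ≤ h := by exact_mod_cast hh
      nlinarith
  have e1 : (2*(m:ℝ) - 1) * π / (2*h) + π / (2*h) = (m:ℝ) * π / h := by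
    field_simp; ring
  have e2 : (2*(m:ℝ) - 1) * π / (2*h) - π / (2*h) = ((m:ℝ) - 1) * π / h := by
    field_simp; ring
  have key := cos_sq_sub_cos_sq (π / (2*h)) ((2*(m:ℝ) - 1) * π / (2*h))
  rw [e1, e2] at key
  have hp := sinprod h hh m
  rw [abs_le]
  constructor <;> nlinarith [key, hp, hcn]

lemma pur_mem (n : ℕ) (hn : 0 < n) (j : ℤ) : pur n j ∈ Omega n := by
  have hn' : (0:ℤ) < n := by exact_mod_cast hn
  have hmod0 : 0 ≤ j % n := Int.emod_nonneg j hn'.ne'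
  have hmodlt : j % n < n := Int.emod_lt_of_pos j hn'
  refine subset_convexHull ℝ _ ?_
  refine ⟨⟨(j % n).toNat, ?_⟩, ?_⟩
  · omega
  · have hco : (((⟨(j % n).toNat, by omega⟩ : Fin n) : ℤ)) = j % n := by
      simp [Int.toNat_of_nonneg hmod0]
    show pur n j = pur n _
    rw [hco]
    have hdiv : j = j % n + (j / n) * n := by
      have h0 := Int.mul_ediv_add_emod j n
      linear_combination -h0
    have hang : 2 * π * (j:ℝ) / n = 2 * π * ((j % n : ℤ):ℝ) / n + (j / n : ℤ) * (2 * π) := by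
      have hnne : ((n:ℝ)) ≠ 0 := by positivity
      rw [show ((j:ℝ)) = ((j % n : ℤ):ℝ) + ((j / n : ℤ):ℝ) * n from by exact_mod_cast hdiv]
      field_simp
    unfold pur
    rw [hang, Real.cos_add_int_mul_two_pi, Real.sin_add_int_mul_two_pi]

lemma omega_z (n : ℕ) : ∀ x ∈ Omega n, uEff x = 1 := by
  intro x hx
  have hsub : Omega n ⊆ {w : V3 | uEff w = 1} := by
    apply convexHull_min ?_ (convex_hyperplane (uEff.isLinear) 1)
    rintro y ⟨i, rfl⟩
    show uEff (pur n i) = 1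
    simp [uEff, pur, LinearMap.proj_apply, Matrix.cons_val_two, Matrix.tail_cons, Matrix.head_cons]
  exact hsub hx

lemma effE_isEffect (n h : ℕ) (hn : n = 2*h) (hh : 0 < h) (hn3 : 3 ≤ n) (k : ℤ) :
    IsEffect (Omega n) (effE n k) := by
  have hc : 0 < Real.cos (π / n) := by
    apply Real.cos_pos_of_mem_Ioo
    have pi0 := Real.pi_pos
    have hn0 : (0:ℝ) < n := by
      have : 0 < n := by omega
      exact_mod_cast this
    constructor
    · have : (0:ℝ) < π / n := by positivity
      linarith
    · rw [div_lt_div_iff₀ hn0 (by norm_num)]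
      have : (3:ℝ) ≤ n := by exact_mod_cast hn3
      nlinarith
  intro x hx
  have hnr : (n:ℝ) = 2*(h:ℝ) := by exact_mod_cast hn
  have hsub : Omega n ⊆ {w : V3 | 0 ≤ effE n k w} ∩ {w : V3 | effE n k w ≤ 1} := by
    apply convexHull_min ?_ (Convex.inter (convex_halfSpace_ge (effE n k).isLinear 0)
      (convex_halfSpace_le (effE n k).isLinear 1))
    rintro y ⟨i, rfl⟩
    have hval := effE_apply n hc k i
    push_cast at hval
    have hb := cos_odd_bound h hh (k - (i:ℤ))
    push_cast at hb
    rw [← hnr, abs_le] at hb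
    refine ⟨?_, ?_⟩ <;> simp only [Set.mem_setOf_eq] <;> rw [hval]
    · have h1 : -1 ≤ Real.cos ((2 * ((k:ℝ) - (i:ℝ)) - 1) * π / n) / Real.cos (π / n) := by
        rw [le_div_iff₀ hc]; linarith [hb.1]
      linarith
    · have h1 : Real.cos ((2 * ((k:ℝ) - (i:ℝ)) - 1) * π / n) / Real.cos (π / n) ≤ 1 := by
        rw [div_le_one hc]; exact hb.2
      linarith
  exact ⟨(hsub hx).1, (hsub hx).2⟩

lemma mix2 {n : ℕ} {S : V3 → ℝ} (hS : IsEntropyOfMixing (Omega n) S)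
    (a b : V3) (ha : a ∈ Omega n) (hb : b ∈ Omega n)
    (e : V3 →ₗ[ℝ] ℝ) (he : IsEffect (Omega n) e)
    (hea : e a = 1) (heb : e b = 0)
    (t s : ℝ) (ht : 0 ≤ t) (hs : 0 ≤ s) (hts : t + s = 1) :
    S (t • a + s • b) = t * S a + s * S b - (t * Real.log t + s * Real.log s) := by
  have hu := omega_z n
  have key := hS.2 2 ![a, b] (by
      intro j; fin_cases j <;> simpa using (by assumption : _)) ?_ ![t, s] ?_ ?_
  · have h1 := key
    simp only [Fin.sum_univ_two, Matrix.cons_val_zero, Matrix.cons_val_one, Matrix.head_cons] at h1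
    linarith [h1]
  · refine ⟨![e, uEff - e], ?_, ?_, ?_⟩
    · intro i
      fin_cases i
      · simpa using he
      · show IsEffect (Omega n) (uEff - e)
        intro w hw
        have h1 := he w hw
        have h2 := hu w hw
        simp only [LinearMap.sub_apply, h2]
        constructor <;> [linarith [h1.2]; linarith [h1.1]]
    · rw [Fin.sum_univ_two]
      simp only [Matrix.cons_val_zero, Matrix.cons_val_one, Matrix.head_cons]
      abel
    · intro i j
      have hua : uEff a = 1 := hu a ha
      have hub : uEff b = 1 := hu b hb
      fin_cases i <;> fin_cases j <;>
        simp [LinearMap.sub_apply, hea, heb, hua, hub]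
  · intro i; fin_cases i <;> simpa using (by assumption : _)
  · simp [Fin.sum_univ_two, hts]

set_option maxHeartbeats 2000000 in
/-- For every even integer `n ≥ 6`, there is no entropy of mixing on `Ω_n`. -/
theorem stmt18 (n : ℕ) (hn : 6 ≤ n) (heven : Even n) :
    ¬ ∃ S : V3 → ℝ, IsEntropyOfMixing (Omega n) S := by
  rintro ⟨S, hS⟩
  obtain ⟨h, hh⟩ := heven
  have hn2 : n = 2 * h := by omega
  have hh3 : 3 ≤ h := by omega
  have hh0 : 0 < h := by omega
  have hn0 : 0 < n := by omega
  have hn3 : 3 ≤ n := by omega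
  have hnr : (n:ℝ) = 2 * (h:ℝ) := by exact_mod_cast hn2
  have hhr : (0:ℝ) < h := by exact_mod_cast hh0
  have hhr3 : (3:ℝ) ≤ h := by exact_mod_cast hh3
  have pi0 := Real.pi_pos
  set θ : ℝ := π / h with hθdef
  have hθ0 : 0 < θ := by positivity
  have hθ3 : θ ≤ π / 3 := by
    rw [hθdef, div_le_div_iff₀ hhr (by norm_num)]
    nlinarith
  set c : ℝ := Real.cos θ with hcdef
  have hc1 : c < 1 := by
    have h2 := Real.strictAntiOn_cos (Set.mem_Icc.2 ⟨le_rfl, pi0.le⟩)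
      (Set.mem_Icc.2 ⟨hθ0.le, by linarith⟩) hθ0
    rw [Real.cos_zero] at h2
    exact h2
  have hc0 : 0 < c := Real.cos_pos_of_mem_Ioo ⟨by linarith, by linarith⟩
  have h1c : (0:ℝ) < 1 + c := by linarith
  -- basic angle facts
  have hπh : (h:ℝ) * θ = π := by rw [hθdef]; field_simp
  have hπn : π / (n:ℝ) = θ / 2 := by rw [hnr, hθdef, div_div]; ring_nf
  have hcπn : 0 < Real.cos (π / n) := by
    rw [hπn]
    exact Real.cos_pos_of_mem_Ioo ⟨by linarith, by linarith⟩
  -- component values of pure states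
  have hang : ∀ j : ℤ, 2 * π * (j:ℝ) / n = (j:ℝ) * θ := by
    intro j; rw [hnr, hθdef]; field_simp
  have wx : ∀ j : ℤ, pur n j 0 = rn n * Real.cos ((j:ℝ) * θ) := by
    intro j; simp [pur, hang j]
  have wy : ∀ j : ℤ, pur n j 1 = rn n * Real.sin ((j:ℝ) * θ) := by
    intro j; simp [pur, hang j]
  have wz : ∀ j : ℤ, pur n j 2 = 1 := by
    intro j; simp [pur, Matrix.cons_val_two, Matrix.tail_cons, Matrix.head_cons]
  have hax : ∀ x : ℝ, Real.cos (((h:ℝ) + x) * θ) = -Real.cos (x * θ) := by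
    intro x
    rw [show ((h:ℝ) + x) * θ = x * θ + (h:ℝ) * θ by ring, hπh, Real.cos_add_pi]
  have hay : ∀ x : ℝ, Real.sin (((h:ℝ) + x) * θ) = -Real.sin (x * θ) := by
    intro x
    rw [show ((h:ℝ) + x) * θ = x * θ + (h:ℝ) * θ by ring, hπh, Real.sin_add_pi]
  -- trig multiple-angle facts
  have hs2 : Real.sin (2 * θ) = 2 * Real.sin θ * c := Real.sin_two_mul θ
  have hc2 : Real.cos (2 * θ) = 2 * c ^ 2 - 1 := Real.cos_two_mul θ
  have hc3 : Real.cos (3 * θ) = 4 * c ^ 3 - 3 * c := by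
    rw [show (3:ℝ) * θ = 2 * θ + θ by ring, Real.cos_add, hc2, hs2]
    linear_combination (-2 * c) * Real.sin_sq_add_cos_sq θ
  have hs3 : Real.sin (3 * θ) = Real.sin θ * (4 * c ^ 2 - 1) := by
    rw [show (3:ℝ) * θ = 2 * θ + θ by ring, Real.sin_add, hs2, hc2]
    ring
  -- effect values
  have hval := effE_apply n hcπn
  have hval1 : ∀ k j : ℤ, ((k:ℝ) - j = 0 ∨ (k:ℝ) - j = 1) → effE n k (pur n j) = 1 := by
    intro k j hm
    have hv := hval k j
    push_cast at hv
    rcases hm with hm | hm <;> rw [hv, hm]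
    · rw [show (2 * (0:ℝ) - 1) * π / n = -(π / n) by ring, Real.cos_neg,
        div_self hcπn.ne']
      norm_num
    · rw [show (2 * (1:ℝ) - 1) * π / n = π / n by ring, div_self hcπn.ne']
      norm_num
  have hval0 : ∀ k j : ℤ,
      ((k:ℝ) - j = h ∨ (k:ℝ) - j = -(h:ℝ) ∨ (k:ℝ) - j = 1 - h) → effE n k (pur n j) = 0 := by
    intro k j hm
    have hv := hval k j
    push_cast at hv
    have hne : (n:ℝ) ≠ 0 := by positivity
    rcases hm with hm | hm | hm <;> rw [hv, hm]
    · rw [show (2 * (h:ℝ) - 1) * π / n = π - π / n by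
        rw [hnr]; field_simp, Real.cos_pi_sub, neg_div, div_self hcπn.ne']
      norm_num
    · rw [show (2 * (-(h:ℝ)) - 1) * π / n = -(π / n + π) by
        rw [hnr]; field_simp; ring, Real.cos_neg, Real.cos_add_pi, neg_div,
        div_self hcπn.ne']
      norm_num
    · rw [show (2 * (1 - (h:ℝ)) - 1) * π / n = π / n - π by
        rw [hnr]; field_simp; ring, Real.cos_sub_pi, neg_div, div_self hcπn.ne']
      norm_num
  -- the effects we use
  have hE : ∀ k : ℤ, IsEffect (Omega n) (effE n k) := effE_isEffect n h hn2 hh0 hn3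
  -- membership
  have hmem : ∀ j : ℤ, pur n j ∈ Omega n := pur_mem n hn0
  have hconv : Convex ℝ (Omega n) := convex_convexHull ℝ _
  -- states
  set P : V3 := (1/2 : ℝ) • pur n 1 + (1/2 : ℝ) • pur n 2 with hPdef
  set Q : V3 := (1/2 : ℝ) • pur n ((h:ℤ) + 1) + (1/2 : ℝ) • pur n ((h:ℤ) + 2) with hQdef
  have hPmem : P ∈ Omega n := hconv (hmem 1) (hmem 2) (by norm_num) (by norm_num) (by norm_num)
  have hQmem : Q ∈ Omega n :=
    hconv (hmem ((h:ℤ) + 1)) (hmem ((h:ℤ) + 2)) (by norm_num) (by norm_num) (by norm_num)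
  -- specific effect values
  have he2P : effE n 2 P = 1 := by
    rw [hPdef, map_add, map_smul, map_smul,
      hval1 2 1 (by norm_num), hval1 2 2 (by norm_num)]
    norm_num
  have he2Q : effE n 2 Q = 0 := by
    rw [hQdef, map_add, map_smul, map_smul,
      hval0 2 ((h:ℤ) + 1) (by push_cast; right; right; ring),
      hval0 2 ((h:ℤ) + 2) (by push_cast; right; left; ring)]
    norm_num
  have he3w2 : effE n 3 (pur n 2) = 1 := hval1 3 2 (by norm_num)
  have he3w3 : effE n 3 (pur n 3) = 1 := hval1 3 3 (by norm_num)
  have he3wh2 : effE n 3 (pur n ((h:ℤ) + 2)) = 0 :=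
    hval0 3 ((h:ℤ) + 2) (by push_cast; right; right; ring)
  have he3wh3 : effE n 3 (pur n ((h:ℤ) + 3)) = 0 :=
    hval0 3 ((h:ℤ) + 3) (by push_cast; right; left; ring)
  have heh3wh2 : effE n ((h:ℤ) + 3) (pur n ((h:ℤ) + 2)) = 1 :=
    hval1 ((h:ℤ) + 3) ((h:ℤ) + 2) (by push_cast; right; ring)
  have heh3w3 : effE n ((h:ℤ) + 3) (pur n 3) = 0 :=
    hval0 ((h:ℤ) + 3) 3 (by push_cast; left; ring)
  -- the weights
  set q : ℝ := (1 + 2 * c) / (2 * (1 + c)) with hqdef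
  set p : ℝ := (2 + c) / (2 * (1 + c)) with hpdef
  have hq0 : 0 ≤ q := by positivity
  have hp0 : 0 ≤ p := by positivity
  have hqhalf : 2⁻¹ ≤ q := by
    rw [hqdef, le_div_iff₀ (by positivity)]; nlinarith
  have hq1 : q ≤ 1 := by
    rw [hqdef, div_le_one (by positivity)]; nlinarith
  have hp1 : p ≤ 1 := by
    rw [hpdef, div_le_one (by positivity)]; nlinarith
  have hqp : q < p := by
    rw [hqdef, hpdef, div_lt_div_iff₀ (by positivity) (by positivity)]; nlinarith
  have h1q : 0 ≤ 1 - q := by linarith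
  have h1p : 0 ≤ 1 - p := by linarith
  -- mixing equations
  have E1 := mix2 hS (pur n 2) (pur n ((h:ℤ) + 2)) (hmem 2) (hmem _) (effE n 3) (hE 3)
    he3w2 he3wh2 (1/2) (1/2) (by norm_num) (by norm_num) (by norm_num)
  have E2 := mix2 hS (pur n 3) (pur n ((h:ℤ) + 3)) (hmem 3) (hmem _) (effE n 3) (hE 3)
    he3w3 he3wh3 (1/2) (1/2) (by norm_num) (by norm_num) (by norm_num)
  have E3 := mix2 hS P Q hPmem hQmem (effE n 2) (hE 2) he2P he2Q
    (1/2) (1/2) (by norm_num) (by norm_num) (by norm_num)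
  have E4 := mix2 hS (pur n 2) (pur n ((h:ℤ) + 3)) (hmem 2) (hmem _) (effE n 3) (hE 3)
    he3w2 he3wh3 q (1 - q) hq0 h1q (by ring)
  have E4' := mix2 hS P Q hPmem hQmem (effE n 2) (hE 2) he2P he2Q
    p (1 - p) hp0 h1p (by ring)
  have E5 := mix2 hS (pur n ((h:ℤ) + 2)) (pur n 3) (hmem _) (hmem 3) (effE n ((h:ℤ) + 3))
    (hE _) heh3wh2 heh3w3 q (1 - q) hq0 h1q (by ring)
  have E5' := mix2 hS P Q hPmem hQmem (effE n 2) (hE 2) he2P he2Q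
    (1 - p) p h1p hp0 (by ring)
  -- point identities
  have hR0 : ∀ j : ℤ, pur n ((h:ℤ) + j) 0 = -(rn n * Real.cos ((j:ℝ) * θ)) := by
    intro j
    rw [wx]
    push_cast
    rw [hax]
    ring
  have hR1 : ∀ j : ℤ, pur n ((h:ℤ) + j) 1 = -(rn n * Real.sin ((j:ℝ) * θ)) := by
    intro j
    rw [wy]
    push_cast
    rw [hay]
    ring
  have P1 : (1/2 : ℝ) • pur n 2 + (1/2 : ℝ) • pur n ((h:ℤ) + 2)
      = (1/2 : ℝ) • pur n 3 + (1/2 : ℝ) • pur n ((h:ℤ) + 3) := by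
    have e0 : ((1/2 : ℝ) • pur n 2 + (1/2 : ℝ) • pur n ((h:ℤ) + 2)) 0
        = ((1/2 : ℝ) • pur n 3 + (1/2 : ℝ) • pur n ((h:ℤ) + 3)) 0 := by
      simp only [Pi.add_apply, Pi.smul_apply, smul_eq_mul]
      rw [wx 2, wx 3, hR0 2, hR0 3]; ring
    have e1 : ((1/2 : ℝ) • pur n 2 + (1/2 : ℝ) • pur n ((h:ℤ) + 2)) 1
        = ((1/2 : ℝ) • pur n 3 + (1/2 : ℝ) • pur n ((h:ℤ) + 3)) 1 := by
      simp only [Pi.add_apply, Pi.smul_apply, smul_eq_mul]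
      rw [wy 2, wy 3, hR1 2, hR1 3]; ring
    have e2 : ((1/2 : ℝ) • pur n 2 + (1/2 : ℝ) • pur n ((h:ℤ) + 2)) 2
        = ((1/2 : ℝ) • pur n 3 + (1/2 : ℝ) • pur n ((h:ℤ) + 3)) 2 := by
      simp only [Pi.add_apply, Pi.smul_apply, smul_eq_mul]
      rw [wz 2, wz 3, wz ((h:ℤ)+2), wz ((h:ℤ)+3)]
    funext i
    fin_cases i
    · simpa using e0
    · simpa using e1
    · simpa using e2
  have P2 : (1/2 : ℝ) • pur n 2 + (1/2 : ℝ) • pur n ((h:ℤ) + 2)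
      = (1/2 : ℝ) • P + (1/2 : ℝ) • Q := by
    rw [hPdef, hQdef]
    have e0 : ((1/2 : ℝ) • pur n 2 + (1/2 : ℝ) • pur n ((h:ℤ) + 2)) 0
        = ((1/2 : ℝ) • ((1/2 : ℝ) • pur n 1 + (1/2 : ℝ) • pur n 2)
          + (1/2 : ℝ) • ((1/2 : ℝ) • pur n ((h:ℤ) + 1) + (1/2 : ℝ) • pur n ((h:ℤ) + 2))) 0 := by
      simp only [Pi.add_apply, Pi.smul_apply, smul_eq_mul]
      rw [wx 1, wx 2, hR0 1, hR0 2]; ring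
    have e1 : ((1/2 : ℝ) • pur n 2 + (1/2 : ℝ) • pur n ((h:ℤ) + 2)) 1
        = ((1/2 : ℝ) • ((1/2 : ℝ) • pur n 1 + (1/2 : ℝ) • pur n 2)
          + (1/2 : ℝ) • ((1/2 : ℝ) • pur n ((h:ℤ) + 1) + (1/2 : ℝ) • pur n ((h:ℤ) + 2))) 1 := by
      simp only [Pi.add_apply, Pi.smul_apply, smul_eq_mul]
      rw [wy 1, wy 2, hR1 1, hR1 2]; ring
    have e2 : ((1/2 : ℝ) • pur n 2 + (1/2 : ℝ) • pur n ((h:ℤ) + 2)) 2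
        = ((1/2 : ℝ) • ((1/2 : ℝ) • pur n 1 + (1/2 : ℝ) • pur n 2)
          + (1/2 : ℝ) • ((1/2 : ℝ) • pur n ((h:ℤ) + 1) + (1/2 : ℝ) • pur n ((h:ℤ) + 2))) 2 := by
      simp only [Pi.add_apply, Pi.smul_apply, smul_eq_mul]
      rw [wz 1, wz 2, wz ((h:ℤ)+1), wz ((h:ℤ)+2)]; ring
    funext i
    fin_cases i
    · simpa using e0
    · simpa using e1
    · simpa using e2
  have P3 : q • pur n 2 + (1 - q) • pur n ((h:ℤ) + 3) = p • P + (1 - p) • Q := by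
    rw [hPdef, hQdef]
    have e0 : (q • pur n 2 + (1 - q) • pur n ((h:ℤ) + 3)) 0
        = (p • ((1/2 : ℝ) • pur n 1 + (1/2 : ℝ) • pur n 2)
          + (1 - p) • ((1/2 : ℝ) • pur n ((h:ℤ) + 1) + (1/2 : ℝ) • pur n ((h:ℤ) + 2))) 0 := by
      simp only [Pi.add_apply, Pi.smul_apply, smul_eq_mul]
      rw [wx 1, wx 2, hR0 1, hR0 2, hR0 3]
      push_cast
      rw [hc2, hc3, hqdef, hpdef]
      field_simp
      ring
    have e1 : (q • pur n 2 + (1 - q) • pur n ((h:ℤ) + 3)) 1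
        = (p • ((1/2 : ℝ) • pur n 1 + (1/2 : ℝ) • pur n 2)
          + (1 - p) • ((1/2 : ℝ) • pur n ((h:ℤ) + 1) + (1/2 : ℝ) • pur n ((h:ℤ) + 2))) 1 := by
      simp only [Pi.add_apply, Pi.smul_apply, smul_eq_mul]
      rw [wy 1, wy 2, hR1 1, hR1 2, hR1 3]
      push_cast
      rw [hs2, hs3, hqdef, hpdef]
      field_simp
      ring
    have e2 : (q • pur n 2 + (1 - q) • pur n ((h:ℤ) + 3)) 2
        = (p • ((1/2 : ℝ) • pur n 1 + (1/2 : ℝ) • pur n 2)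
          + (1 - p) • ((1/2 : ℝ) • pur n ((h:ℤ) + 1) + (1/2 : ℝ) • pur n ((h:ℤ) + 2))) 2 := by
      simp only [Pi.add_apply, Pi.smul_apply, smul_eq_mul]
      rw [wz 2, wz 1, wz ((h:ℤ)+1), wz ((h:ℤ)+2), wz ((h:ℤ)+3)]; ring
    funext i
    fin_cases i
    · simpa using e0
    · simpa using e1
    · simpa using e2
  have P4 : q • pur n ((h:ℤ) + 2) + (1 - q) • pur n 3 = (1 - p) • P + p • Q := by
    rw [hPdef, hQdef]
    have e0 : (q • pur n ((h:ℤ) + 2) + (1 - q) • pur n 3) 0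
        = ((1 - p) • ((1/2 : ℝ) • pur n 1 + (1/2 : ℝ) • pur n 2)
          + p • ((1/2 : ℝ) • pur n ((h:ℤ) + 1) + (1/2 : ℝ) • pur n ((h:ℤ) + 2))) 0 := by
      simp only [Pi.add_apply, Pi.smul_apply, smul_eq_mul]
      rw [wx 1, wx 2, wx 3, hR0 1, hR0 2]
      push_cast
      rw [hc2, hc3, hqdef, hpdef]
      field_simp
      ring
    have e1 : (q • pur n ((h:ℤ) + 2) + (1 - q) • pur n 3) 1
        = ((1 - p) • ((1/2 : ℝ) • pur n 1 + (1/2 : ℝ) • pur n 2)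
          + p • ((1/2 : ℝ) • pur n ((h:ℤ) + 1) + (1/2 : ℝ) • pur n ((h:ℤ) + 2))) 1 := by
      simp only [Pi.add_apply, Pi.smul_apply, smul_eq_mul]
      rw [wy 1, wy 2, wy 3, hR1 1, hR1 2]
      push_cast
      rw [hs2, hs3, hqdef, hpdef]
      field_simp
      ring
    have e2 : (q • pur n ((h:ℤ) + 2) + (1 - q) • pur n 3) 2
        = ((1 - p) • ((1/2 : ℝ) • pur n 1 + (1/2 : ℝ) • pur n 2)
          + p • ((1/2 : ℝ) • pur n ((h:ℤ) + 1) + (1/2 : ℝ) • pur n ((h:ℤ) + 2))) 2 := by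
      simp only [Pi.add_apply, Pi.smul_apply, smul_eq_mul]
      rw [wz 3, wz 1, wz 2, wz ((h:ℤ)+1), wz ((h:ℤ)+2)]; ring
    funext i
    fin_cases i
    · simpa using e0
    · simpa using e1
    · simpa using e2
  rw [P2] at E1
  rw [← P1, P2] at E2
  rw [P3] at E4
  rw [P4] at E5
  have hT1 : S (pur n 2) + S (pur n ((h:ℤ) + 2)) = S P + S Q := by
    have hE13 := E1.symm.trans E3
    linear_combination 2 * hE13
  have hT2 : S (pur n 3) + S (pur n ((h:ℤ) + 3)) = S P + S Q := by
    have hE23 := E2.symm.trans E3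
    linear_combination 2 * hE23
  have hLL : q * Real.log q + (1 - q) * Real.log (1 - q)
      = p * Real.log p + (1 - p) * Real.log (1 - p) := by
    linear_combination (1/2) * E4 - (1/2) * E4' + (1/2) * E5 - (1/2) * E5'
      + (q/2) * hT1 + ((1-q)/2) * hT2
  have hbin : Real.binEntropy q = Real.binEntropy p := by
    rw [Real.binEntropy, Real.binEntropy, Real.log_inv, Real.log_inv,
      Real.log_inv, Real.log_inv]
    linear_combination -hLL
  have hstrict := Real.binEntropy_strictAntiOn
    (Set.mem_Icc.2 ⟨hqhalf, hq1⟩)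
    (Set.mem_Icc.2 ⟨le_trans hqhalf hqp.le, hp1⟩) hqp
  rw [hbin] at hstrict
  exact lt_irrefl _ hstrict
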